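/- arXiv:1807.10344 — 7 statements merged into one kernel-verified Lean document; each statement's English description precedes it below -/
import Mathlib

section
/- Let L > 0, κ > 0, w : [0,L] → ℝ continuous, and let μ be a finite Borel measure on [0,L] with total mass η := μ([0,L]) satisfying 0 < η ≤ 1. Then the map Ψ_{w,μ} is a contraction on C([0,L]) with constant κ/(1+κ) < 1: for all p, p' ∈ C([0,L]), sup_{x∈[0,L]} |Ψ_{w,μ}(p)(x) − Ψ_{w,μ}(p')(x)| ≤ (κ/(1+κ))·sup_{x∈[0,L]} |p(x) − p'(x)|. -/
/-!
`Ψ_{w,μ}(p)` depends on `p` only through its mean `p̄`, which is 1-Lipschitz for the sup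
norm, and `s ↦ s - (s - t)⁺ / 2` is 1-Lipschitz (its slope is `1` or `1/2`). Hence the
Lipschitz constant is `c = κη/(1+κη)`, which is increasing in `η`, so at most `κ/(1+κ)`
for `η ≤ 1`.
-/

open MeasureTheory

/-- The market-price map `Ψ_{w,μ}(p)(x) = a + c·p̄ − (1/2)(a + c·p̄ − w(x))⁺`,
with `η = μ([0,L])`, `a = 1/(1+κη)`, `c = 1 − a` and `p̄ = (1/η)∫ p dμ`. -/
noncomputable def Psi (L κ : ℝ) (w : C(Set.Icc (0:ℝ) L, ℝ))
    (μ : Measure (Set.Icc (0:ℝ) L)) (p : C(Set.Icc (0:ℝ) L, ℝ))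
    (x : Set.Icc (0:ℝ) L) : ℝ :=
  let η : ℝ := (μ Set.univ).toReal
  let a : ℝ := 1 / (1 + κ * η)
  let c : ℝ := 1 - a
  let pbar : ℝ := (1 / η) * ∫ y, p y ∂μ
  a + c * pbar - (1 / 2) * max (a + c * pbar - w x) 0

lemma abs_sub_half_max_sub_le (s s' t : ℝ) :
    |(s - 1 / 2 * max (s - t) 0) - (s' - 1 / 2 * max (s' - t) 0)| ≤ |s - s'| := by
  rw [abs_le]
  constructor <;>
  rcases le_total (s - t) 0 with hs | hs <;> rcases le_total (s' - t) 0 with hs' | hs' <;>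
    simp only [max_eq_right, max_eq_left, hs, hs'] <;>
    linarith [le_abs_self (s - s'), neg_abs_le (s - s')]

section Average

variable {X : Type*} [TopologicalSpace X] [CompactSpace X] [MeasurableSpace X]
  [OpensMeasurableSpace X] (μ : Measure X) [IsFiniteMeasure μ]

lemma ContinuousMap.integrable (f : C(X, ℝ)) : Integrable f μ :=
  f.continuous.integrable_of_hasCompactSupport (HasCompactSupport.of_compactSpace _)

lemma ContinuousMap.abs_integral_sub_integral_le (f g : C(X, ℝ)) :
    |∫ x, f x ∂μ - ∫ x, g x ∂μ| ≤ ‖f - g‖ * μ.real Set.univ := by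
  rw [← integral_sub (f.integrable μ) (g.integrable μ)]
  exact norm_integral_le_of_norm_le_const (.of_forall fun x => (f - g).norm_coe_le_norm x)

lemma ContinuousMap.abs_average_sub_average_le (f g : C(X, ℝ)) :
    |⨍ x, f x ∂μ - ⨍ x, g x ∂μ| ≤ ‖f - g‖ := by
  rcases (measureReal_nonneg : 0 ≤ μ.real Set.univ).eq_or_lt with hμ | hμ
  · simp only [average_eq, ← hμ, inv_zero, zero_smul, sub_self, abs_zero, norm_nonneg]
  · rw [average_eq, average_eq, smul_eq_mul, smul_eq_mul, ← mul_sub, abs_mul,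
      abs_of_pos (inv_pos.2 hμ), inv_mul_le_iff₀ hμ, mul_comm]
    exact abs_integral_sub_integral_le μ f g

end Average

lemma one_sub_one_div_one_add_mul_le {κ η : ℝ} (hκ : 0 ≤ κ) (hη₀ : 0 ≤ η) (hη₁ : η ≤ 1) :
    1 - 1 / (1 + κ * η) ≤ κ / (1 + κ) := by
  have h : 1 / (1 + κ) ≤ 1 / (1 + κ * η) :=
    one_div_le_one_div_of_le (by positivity) (by nlinarith)
  have hκ' : 1 - κ / (1 + κ) = 1 / (1 + κ) := by field_simp; ring
  linarith

lemma abs_Psi_sub_Psi_le {L κ : ℝ} (hκ : 0 ≤ κ) (w : C(Set.Icc (0:ℝ) L, ℝ))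
    (μ : Measure (Set.Icc (0:ℝ) L)) [IsFiniteMeasure μ] (p p' : C(Set.Icc (0:ℝ) L, ℝ))
    (x : Set.Icc (0:ℝ) L) :
    |Psi L κ w μ p x - Psi L κ w μ p' x| ≤ (1 - 1 / (1 + κ * μ.real Set.univ)) * ‖p - p'‖ := by
  set a := 1 / (1 + κ * μ.real Set.univ)
  set c := 1 - a
  have hc : 0 ≤ c := by
    rw [sub_nonneg, div_le_one (by positivity)]
    exact le_add_of_nonneg_right (by positivity)
  have hmean : ∀ f : C(Set.Icc (0:ℝ) L, ℝ),
      1 / μ.real Set.univ * ∫ y, f y ∂μ = ⨍ y, f y ∂μ := fun f => by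
    rw [average_eq, smul_eq_mul, one_div]
  calc |Psi L κ w μ p x - Psi L κ w μ p' x|
      ≤ |(a + c * ⨍ y, p y ∂μ) - (a + c * ⨍ y, p' y ∂μ)| := by
        simp only [Psi, ← measureReal_def, hmean]
        exact abs_sub_half_max_sub_le _ _ _
    _ = c * |⨍ y, p y ∂μ - ⨍ y, p' y ∂μ| := by
        rw [add_sub_add_left_eq_sub, ← mul_sub, abs_mul, abs_of_nonneg hc]
    _ ≤ c * ‖p - p'‖ := by gcongr; exact ContinuousMap.abs_average_sub_average_le μ p p'

theorem Psi_contraction_general (L κ : ℝ) (hκ : 0 < κ)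
    (w : C(Set.Icc (0:ℝ) L, ℝ))
    (μ : Measure (Set.Icc (0:ℝ) L)) [IsFiniteMeasure μ]
    (hη1 : (μ Set.univ).toReal ≤ 1)
    (p p' : C(Set.Icc (0:ℝ) L, ℝ)) :
    κ / (1 + κ) < 1 ∧
    (⨆ x : Set.Icc (0:ℝ) L, |Psi L κ w μ p x - Psi L κ w μ p' x|) ≤
      (κ / (1 + κ)) * ⨆ x : Set.Icc (0:ℝ) L, |p x - p' x| := by
  refine ⟨(div_lt_one (by positivity)).2 (lt_one_add κ), ?_⟩
  have hnorm : (⨆ x : Set.Icc (0:ℝ) L, |p x - p' x|) = ‖p - p'‖ :=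
    (ContinuousMap.norm_eq_iSup_norm (p - p')).symm
  rw [hnorm]
  refine Real.iSup_le (fun x => (abs_Psi_sub_Psi_le hκ.le w μ p p' x).trans ?_) (by positivity)
  exact mul_le_mul_of_nonneg_right
    (one_sub_one_div_one_add_mul_le hκ.le measureReal_nonneg hη1) (norm_nonneg _)

/-- `Ψ_{w,μ}` is a contraction on `C([0,L])` with constant `κ/(1+κ) < 1`. -/
theorem Psi_contraction (L κ : ℝ) (hL : 0 < L) (hκ : 0 < κ)
    (w : C(Set.Icc (0:ℝ) L, ℝ))
    (μ : Measure (Set.Icc (0:ℝ) L)) [IsFiniteMeasure μ]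
    (hη : 0 < (μ Set.univ).toReal) (hη1 : (μ Set.univ).toReal ≤ 1)
    (p p' : C(Set.Icc (0:ℝ) L, ℝ)) :
    κ / (1 + κ) < 1 ∧
    (⨆ x : Set.Icc (0:ℝ) L, |Psi L κ w μ p x - Psi L κ w μ p' x|) ≤
      (κ / (1 + κ)) * ⨆ x : Set.Icc (0:ℝ) L, |p x - p' x| :=
  Psi_contraction_general L κ hκ w μ hη1 p p'
end

section
/- Let L > 0, κ > 0, w : [0,L] → ℝ continuous, and let μ be a finite Borel measure on [0,L] with total mass η := μ([0,L]) satisfying 0 < η ≤ 1. If p ∈ C([0,L]) satisfies −‖w‖_∞ ≤ p(x) ≤ 1 for all x ∈ [0,L], then Ψ_{w,μ}(p) also satisfies −‖w‖_∞ ≤ Ψ_{w,μ}(p)(x) ≤ 1 for all x ∈ [0,L]; that is, the set {p ∈ C([0,L]) : −‖w‖_∞ ≤ p ≤ 1} is invariant under Ψ_{w,μ}. -/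
/-! `Ψ_{w,μ}(p)(x)` is built in three steps, each of which preserves the interval `[-‖w‖_∞, 1]`:
the mean `p̄` of `p` is a convex combination of its values, `m = a + c·p̄` is a convex
combination of `1` and `p̄`, and `m - (m - w(x))⁺/2` is either `m` or the midpoint of `m`
and `w(x) ≥ -‖w‖_∞`. -/

open MeasureTheory

open Set

lemma ContinuousMap.neg_iSup_abs_le {X : Type*} [TopologicalSpace X] [CompactSpace X]
    (f : C(X, ℝ)) (x : X) : -(⨆ y, |f y|) ≤ f x := by
  have h : |f x| ≤ ⨆ y, |f y| := by
    simpa only [Real.norm_eq_abs, f.norm_eq_iSup_norm] using f.norm_coe_le_norm x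
  exact neg_le_of_abs_le h

lemma one_div_one_add_mem_Icc {t : ℝ} (ht : 0 ≤ t) : 1 / (1 + t) ∈ Icc (0 : ℝ) 1 :=
  ⟨by positivity, (div_le_one (by positivity)).2 (by linarith)⟩

lemma add_one_sub_mul_mem_Icc {a t lo hi : ℝ} (ha : a ∈ Icc (0 : ℝ) 1)
    (h1 : (1 : ℝ) ∈ Icc lo hi) (ht : t ∈ Icc lo hi) : a + (1 - a) * t ∈ Icc lo hi := by
  simpa only [smul_eq_mul, mul_one] using
    convex_Icc lo hi h1 ht ha.1 (sub_nonneg.2 ha.2) (add_sub_cancel a 1)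

lemma sub_half_max_sub_mem_Icc {m w lo hi : ℝ} (hm : m ∈ Icc lo hi) (hw : lo ≤ w) :
    m - 1 / 2 * max (m - w) 0 ∈ Icc lo hi := by
  obtain ⟨hlo, hhi⟩ := hm
  constructor
  · rcases le_total (m - w) 0 with h | h
    · rw [max_eq_right h]; linarith
    · rw [max_eq_left h]; linarith
  · linarith [le_max_right (m - w) 0]

theorem Psi_invariant_general (L κ : ℝ) (hκ : 0 < κ)
    (w : C(Set.Icc (0:ℝ) L, ℝ))
    (μ : Measure (Set.Icc (0:ℝ) L)) [IsFiniteMeasure μ]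
    (hη : 0 < (μ Set.univ).toReal)
    (p : C(Set.Icc (0:ℝ) L, ℝ))
    (hp : ∀ x : Set.Icc (0:ℝ) L,
      -(⨆ y : Set.Icc (0:ℝ) L, |w y|) ≤ p x ∧ p x ≤ 1) :
    ∀ x : Set.Icc (0:ℝ) L,
      -(⨆ y : Set.Icc (0:ℝ) L, |w y|) ≤ Psi L κ w μ p x ∧ Psi L κ w μ p x ≤ 1 := by
  intro x
  have : NeZero μ := ⟨by rintro rfl; simp at hη⟩
  have hpbar : 1 / (μ univ).toReal * ∫ y, p y ∂μ ∈ Icc (-⨆ y, |w y|) 1 := by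
    rw [one_div, ← smul_eq_mul, ← measureReal_def, ← average_eq]
    exact (convex_Icc _ _).average_mem isClosed_Icc (.of_forall hp)
      (p.continuous.integrable_of_hasCompactSupport (.of_compactSpace _))
  have ha := one_div_one_add_mem_Icc (mul_pos hκ hη).le
  exact sub_half_max_sub_mem_Icc
    (add_one_sub_mul_mem_Icc ha ⟨hpbar.1.trans hpbar.2, le_rfl⟩ hpbar)
    (w.neg_iSup_abs_le x)

/-- The set `{p : −‖w‖_∞ ≤ p ≤ 1}` is invariant under `Ψ_{w,μ}`. -/
theorem Psi_invariant (L κ : ℝ) (hL : 0 < L) (hκ : 0 < κ)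
    (w : C(Set.Icc (0:ℝ) L, ℝ))
    (μ : Measure (Set.Icc (0:ℝ) L)) [IsFiniteMeasure μ]
    (hη : 0 < (μ Set.univ).toReal) (hη1 : (μ Set.univ).toReal ≤ 1)
    (p : C(Set.Icc (0:ℝ) L, ℝ))
    (hp : ∀ x : Set.Icc (0:ℝ) L,
      -(⨆ y : Set.Icc (0:ℝ) L, |w y|) ≤ p x ∧ p x ≤ 1) :
    ∀ x : Set.Icc (0:ℝ) L,
      -(⨆ y : Set.Icc (0:ℝ) L, |w y|) ≤ Psi L κ w μ p x ∧ Psi L κ w μ p x ≤ 1 :=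
  Psi_invariant_general L κ hκ w μ hη p hp
end

section
/- Let L > 0, κ > 0, w : [0,L] → ℝ continuous, and let μ be a finite Borel measure on [0,L] with total mass η := μ([0,L]) satisfying 0 < η ≤ 1. Then there exists a unique p* ∈ C([0,L]) with Ψ_{w,μ}(p*) = p*, and this fixed point satisfies −‖w‖_∞ ≤ p*(x) ≤ 1 for all x ∈ [0,L]. -/
open MeasureTheory

/-!
`Ψ p` depends on `p` only through the scalar `a + c·p̄`, and `u ↦ u - (u - w)⁺/2` is
1-Lipschitz while averaging is 1-Lipschitz for the sup norm, so `Ψ` is a contraction of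
`C([0,L])` with constant `c = 1 - a < 1`; Banach's theorem gives the unique fixed point.
Since `a + c·p̄` is a convex combination of `1` and `p̄`, the closed set
`{p | -‖w‖ ≤ p ≤ 1}` is `Ψ`-invariant, so it contains the fixed point, the limit of the
iterates of `0`.
-/

open Set Function

variable {X : Type*} [TopologicalSpace X]

theorem ContractingWith.fixedPoint_mem_of_mapsTo {α : Type*} [MetricSpace α] [Nonempty α]
    [CompleteSpace α] {K : NNReal} {f : α → α} (hf : ContractingWith K f) {s : Set α}
    (hs : IsClosed s) (hsf : MapsTo f s s) {x : α} (hx : x ∈ s) :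
    ContractingWith.fixedPoint f hf ∈ s :=
  hs.mem_of_tendsto (hf.tendsto_iterate_fixedPoint x)
    (Filter.Eventually.of_forall fun n => hsf.iterate n hx)

noncomputable def marketPrice (w : C(X, ℝ)) (u : ℝ) : C(X, ℝ) where
  toFun x := u - 1 / 2 * max (u - w x) 0
  continuous_toFun := by fun_prop

theorem marketPrice_apply (w : C(X, ℝ)) (u : ℝ) (x : X) :
    marketPrice w u x = u - 1 / 2 * max (u - w x) 0 := rfl

theorem marketPrice_le (w : C(X, ℝ)) (u : ℝ) (x : X) : marketPrice w u x ≤ u := by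
  rw [marketPrice_apply]
  linarith [le_max_right (u - w x) 0]

theorem le_marketPrice {w : C(X, ℝ)} {u m : ℝ} {x : X} (hu : m ≤ u) (hw : m ≤ w x) :
    m ≤ marketPrice w u x := by
  rw [marketPrice_apply]
  rcases le_total (u - w x) 0 with h | h
  · rw [max_eq_right h]; linarith
  · rw [max_eq_left h]; linarith

variable [CompactSpace X]

theorem dist_marketPrice_le (w : C(X, ℝ)) (u v : ℝ) :
    dist (marketPrice w u) (marketPrice w v) ≤ dist u v := by
  refine (ContinuousMap.dist_le dist_nonneg).2 fun x => ?_
  simp only [marketPrice_apply, Real.dist_eq]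
  rw [abs_sub_le_iff]
  constructor <;>
  rcases le_total (u - w x) 0 with hu | hu <;> rcases le_total (v - w x) 0 with hv | hv <;>
  simp only [max_eq_left, max_eq_right, hu, hv] <;>
  linarith [le_abs_self (u - v), neg_abs_le (u - v)]

variable [MeasurableSpace X] [OpensMeasurableSpace X]

theorem abs_average_sub_average_le (μ : Measure X) [IsFiniteMeasure μ] (p q : C(X, ℝ)) :
    |⨍ x, p x ∂μ - ⨍ x, q x ∂μ| ≤ dist p q := by
  have hint : ∀ f : C(X, ℝ), Integrable f μ := fun f =>
    f.continuous.integrable_of_hasCompactSupport (HasCompactSupport.of_compactSpace _)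
  have hpq : ‖∫ x, (p x - q x) ∂μ‖ ≤ dist p q * μ.real univ :=
    norm_integral_le_of_norm_le_const (Filter.Eventually.of_forall fun x =>
      by simpa [Real.dist_eq] using ContinuousMap.dist_apply_le_dist (f := p) (g := q) x)
  rw [average_eq, average_eq, smul_eq_mul, smul_eq_mul, ← mul_sub,
    ← integral_sub (hint p) (hint q), abs_mul, abs_inv, abs_of_nonneg measureReal_nonneg]
  rcases measureReal_nonneg.eq_or_lt with h | h
  · rw [← h, inv_zero, zero_mul]; exact dist_nonneg
  · rw [inv_mul_le_iff₀ h, mul_comm]; exact hpq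

noncomputable def priceMap (a : ℝ) (w : C(X, ℝ)) (μ : Measure X) (p : C(X, ℝ)) : C(X, ℝ) :=
  marketPrice w (a + (1 - a) * ⨍ x, p x ∂μ)

theorem contractingWith_priceMap {a : ℝ} (ha0 : 0 < a) (ha1 : a ≤ 1) (w : C(X, ℝ))
    (μ : Measure X) [IsFiniteMeasure μ] :
    ContractingWith ⟨1 - a, sub_nonneg.2 ha1⟩ (priceMap a w μ) := by
  refine ⟨NNReal.coe_lt_coe.1 (show 1 - a < 1 by linarith),
    LipschitzWith.of_dist_le_mul fun p q => ?_⟩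
  calc dist (priceMap a w μ p) (priceMap a w μ q)
      ≤ dist (a + (1 - a) * ⨍ x, p x ∂μ) (a + (1 - a) * ⨍ x, q x ∂μ) :=
        dist_marketPrice_le w _ _
    _ = (1 - a) * |⨍ x, p x ∂μ - ⨍ x, q x ∂μ| := by
        rw [Real.dist_eq, add_sub_add_left_eq_sub, ← mul_sub, abs_mul,
          abs_of_nonneg (by linarith)]
    _ ≤ (1 - a) * dist p q :=
        mul_le_mul_of_nonneg_left (abs_average_sub_average_le μ p q) (by linarith)

theorem mapsTo_priceMap {a M : ℝ} (ha0 : 0 ≤ a) (ha1 : a ≤ 1) {w : C(X, ℝ)}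
    (hw : ∀ x, -M ≤ w x) {μ : Measure X} [IsFiniteMeasure μ] (hμ : μ ≠ 0) :
    MapsTo (priceMap a w μ) {p | ∀ x, p x ∈ Icc (-M) 1} {p | ∀ x, p x ∈ Icc (-M) 1} := by
  intro p hp x
  have hint : Integrable p μ :=
    p.continuous.integrable_of_hasCompactSupport (HasCompactSupport.of_compactSpace _)
  obtain ⟨y, hy⟩ := exists_le_average hμ hint
  obtain ⟨z, hz⟩ := exists_average_le hμ hint
  set pbar := ⨍ x, p x ∂μ
  have hlo : -M ≤ pbar := (hp y).1.trans hy
  have hhi : pbar ≤ 1 := hz.trans (hp z).2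
  have level_le : a + (1 - a) * pbar ≤ 1 := by nlinarith
  have le_level : -M ≤ a + (1 - a) * pbar := by nlinarith
  exact ⟨le_marketPrice le_level (hw x), (marketPrice_le _ _ _).trans level_le⟩

theorem Psi_eq_priceMap (L κ : ℝ) (w : C(Icc (0:ℝ) L, ℝ)) (μ : Measure (Icc (0:ℝ) L))
    (p : C(Icc (0:ℝ) L, ℝ)) :
    Psi L κ w μ p = priceMap (1 / (1 + κ * (μ univ).toReal)) w μ p := by
  funext x
  rw [priceMap, marketPrice_apply, average_eq, smul_eq_mul, ← one_div]
  rfl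

theorem Psi_exists_unique_fixedPoint_general (L κ : ℝ) (hκ : 0 < κ)
    (w : C(Set.Icc (0:ℝ) L, ℝ))
    (μ : Measure (Set.Icc (0:ℝ) L)) [IsFiniteMeasure μ]
    (hη : 0 < (μ Set.univ).toReal) :
    (∃! pstar : C(Set.Icc (0:ℝ) L, ℝ),
      ∀ x : Set.Icc (0:ℝ) L, Psi L κ w μ pstar x = pstar x) ∧
    (∀ pstar : C(Set.Icc (0:ℝ) L, ℝ),
      (∀ x : Set.Icc (0:ℝ) L, Psi L κ w μ pstar x = pstar x) →
      ∀ x : Set.Icc (0:ℝ) L,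
        -(⨆ y : Set.Icc (0:ℝ) L, |w y|) ≤ pstar x ∧ pstar x ≤ 1) := by
  set a := 1 / (1 + κ * (μ univ).toReal)
  have ha0 : 0 < a := by positivity
  have ha1 : a ≤ 1 := div_le_one_of_le₀ (by nlinarith) (by positivity)
  have hfix (p : C(Icc (0:ℝ) L, ℝ)) :
      (∀ x, Psi L κ w μ p x = p x) ↔ IsFixedPt (priceMap a w μ) p := by
    rw [Psi_eq_priceMap, IsFixedPt, ContinuousMap.ext_iff]
  have hμ : μ ≠ 0 := Measure.measure_univ_ne_zero.1 (ENNReal.toReal_pos_iff.1 hη).1.ne'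
  have hf := contractingWith_priceMap ha0 ha1 w μ
  have huniq (p) (hp : ∀ x, Psi L κ w μ p x = p x) : p = hf.fixedPoint :=
    hf.fixedPoint_unique ((hfix p).1 hp)
  have hclosed : IsClosed {p : C(Icc (0:ℝ) L, ℝ) | ∀ x, p x ∈ Icc (-‖w‖) 1} := by
    simp only [ofPred_forall]
    exact isClosed_iInter fun x => isClosed_Icc.preimage (continuous_eval_const x)
  have hbound := hf.fixedPoint_mem_of_mapsTo hclosed
    (mapsTo_priceMap ha0.le ha1
      (fun x => neg_le_of_abs_le (w.norm_coe_le_norm x)) hμ) (x := 0) (by simp)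
  have hnorm : (⨆ y, |w y|) = ‖w‖ := by simp [w.norm_eq_iSup_norm]
  refine ⟨⟨_, (hfix _).2 hf.fixedPoint_isFixedPt, huniq⟩, fun p hp x => ?_⟩
  rw [hnorm, huniq p hp]
  exact hbound x

/-- `Ψ_{w,μ}` has a unique fixed point `p*` in `C([0,L])`, and it satisfies
`−‖w‖_∞ ≤ p* ≤ 1`. -/
theorem Psi_exists_unique_fixedPoint (L κ : ℝ) (hL : 0 < L) (hκ : 0 < κ)
    (w : C(Set.Icc (0:ℝ) L, ℝ))
    (μ : Measure (Set.Icc (0:ℝ) L)) [IsFiniteMeasure μ]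
    (hη : 0 < (μ Set.univ).toReal) (hη1 : (μ Set.univ).toReal ≤ 1) :
    (∃! pstar : C(Set.Icc (0:ℝ) L, ℝ),
      ∀ x : Set.Icc (0:ℝ) L, Psi L κ w μ pstar x = pstar x) ∧
    (∀ pstar : C(Set.Icc (0:ℝ) L, ℝ),
      (∀ x : Set.Icc (0:ℝ) L, Psi L κ w μ pstar x = pstar x) →
      ∀ x : Set.Icc (0:ℝ) L,
        -(⨆ y : Set.Icc (0:ℝ) L, |w y|) ≤ pstar x ∧ pstar x ≤ 1) :=
  Psi_exists_unique_fixedPoint_general L κ hκ w μ hη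
end

section
/- Let L > 0, κ > 0, w : [0,L] → ℝ continuous, and let μ be a finite Borel measure on [0,L] with total mass η := μ([0,L]) satisfying 0 < η ≤ 1. If w(x) ≥ 0 for all x ∈ [0,L], then the unique fixed point p* ∈ C([0,L]) of Ψ_{w,μ} satisfies p*(x) ≥ 0 for all x ∈ [0,L]. -/
open MeasureTheory

/-!
Write `m = a + c·p̄`, so that `p* = m − ½(m − w)⁺`. If `m ≥ 0`, then `(m − w)⁺ ≤ m` because
`w ≥ 0`, hence `p* ≥ m/2 ≥ 0`. If `m < 0`, then `(m − w)⁺ = 0`, so `p* ≡ m` and `p̄ = m`; the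
definition of `m` becomes `m = a + (1 − a)m`, i.e. `m = 1` since `a ≠ 0`, a contradiction.
-/

lemma sub_half_max_sub_nonneg {m w : ℝ} (hm : 0 ≤ m) (hw : 0 ≤ w) :
    0 ≤ m - 1 / 2 * max (m - w) 0 := by
  have : max (m - w) 0 ≤ m := max_le (by linarith) hm
  linarith

lemma sub_half_max_sub_eq_self {m w : ℝ} (hm : m < 0) (hw : 0 ≤ w) :
    m - 1 / 2 * max (m - w) 0 = m := by
  rw [max_eq_right (by linarith)]
  ring

lemma eq_one_of_eq_add_one_sub_mul {a m : ℝ} (ha : a ≠ 0) (h : m = a + (1 - a) * m) :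
    m = 1 := by
  have : a * (m - 1) = 0 := by linear_combination h
  simpa [ha, sub_eq_zero] using this

lemma one_div_measureReal_mul_integral_const {α : Type*} [MeasurableSpace α] {μ : Measure α}
    (hμ : μ.real Set.univ ≠ 0) (m : ℝ) :
    1 / μ.real Set.univ * ∫ _ : α, m ∂μ = m := by
  rw [integral_const, smul_eq_mul]
  field_simp

theorem Psi_fixedPoint_nonneg_general (L κ : ℝ) (hκ : 0 < κ)
    (w : C(Set.Icc (0:ℝ) L, ℝ)) (hw : ∀ x : Set.Icc (0:ℝ) L, 0 ≤ w x)
    (μ : Measure (Set.Icc (0:ℝ) L))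
    (hη : 0 < (μ Set.univ).toReal)
    (pstar : C(Set.Icc (0:ℝ) L, ℝ))
    (hfix : ∀ x : Set.Icc (0:ℝ) L, Psi L κ w μ pstar x = pstar x) :
    ∀ x : Set.Icc (0:ℝ) L, 0 ≤ pstar x := by
  set η := (μ Set.univ).toReal
  set a := 1 / (1 + κ * η)
  set m := a + (1 - a) * (1 / η * ∫ y, pstar y ∂μ) with hm_def
  have hpstar (y) : pstar y = m - 1 / 2 * max (m - w y) 0 := (hfix y).symm
  rcases lt_or_ge m 0 with hm | hm
  · have hconst : (pstar : _ → ℝ) = fun _ ↦ m :=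
      funext fun y ↦ (hpstar y).trans (sub_half_max_sub_eq_self hm (hw y))
    have hmean : 1 / η * ∫ y, pstar y ∂μ = m := by
      rw [hconst]
      exact one_div_measureReal_mul_integral_const hη.ne' m
    have ha : a ≠ 0 := by positivity
    have hm_one := eq_one_of_eq_add_one_sub_mul ha (hm_def.trans (by rw [hmean]))
    linarith
  · exact fun x ↦ (hpstar x) ▸ sub_half_max_sub_nonneg hm (hw x)

/-- If `w ≥ 0`, then the (unique) fixed point of `Ψ_{w,μ}` is nonnegative. -/
theorem Psi_fixedPoint_nonneg (L κ : ℝ) (hL : 0 < L) (hκ : 0 < κ)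
    (w : C(Set.Icc (0:ℝ) L, ℝ)) (hw : ∀ x : Set.Icc (0:ℝ) L, 0 ≤ w x)
    (μ : Measure (Set.Icc (0:ℝ) L)) [IsFiniteMeasure μ]
    (hη : 0 < (μ Set.univ).toReal) (hη1 : (μ Set.univ).toReal ≤ 1)
    (pstar : C(Set.Icc (0:ℝ) L, ℝ))
    (hfix : ∀ x : Set.Icc (0:ℝ) L, Psi L κ w μ pstar x = pstar x) :
    ∀ x : Set.Icc (0:ℝ) L, 0 ≤ pstar x :=
  Psi_fixedPoint_nonneg_general L κ hκ w hw μ hη pstar hfix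
end

section
/- Let L > 0, κ > 0, w : [0,L] → ℝ continuous, and let μ be a finite Borel measure on [0,L] with total mass η := μ([0,L]) satisfying 0 < η ≤ 1. Let p* ∈ C([0,L]) be the unique fixed point of Ψ_{w,μ}. Then for all x₁, x₂ ∈ [0,L], |p*(x₁) − p*(x₂)| ≤ (1/2)|w(x₁) − w(x₂)|. In particular, p* inherits (one half of) any modulus of continuity of w. -/
open MeasureTheory

/-
`Ψ_{w,μ}(p)(x)` depends on `x` only through `w(x)`, via `t ↦ m − (1/2)(m − t)⁺` with the
`x`-independent level `m = a + c·p̄`; this map is `1/2`-Lipschitz because `t ↦ (m − t)⁺` is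
`1`-Lipschitz. Evaluating the fixed-point identity `p* = Ψ_{w,μ}(p*)` at two points gives the bound.
-/

theorem abs_sub_half_posPart_sub_le (m s t : ℝ) :
    |m - 1 / 2 * max (m - s) 0 - (m - 1 / 2 * max (m - t) 0)| ≤ 1 / 2 * |s - t| :=
  calc |m - 1 / 2 * max (m - s) 0 - (m - 1 / 2 * max (m - t) 0)|
      = 1 / 2 * |max (m - t) 0 - max (m - s) 0| := by
        rw [← abs_of_pos (by norm_num : (0 : ℝ) < 1 / 2), ← abs_mul]
        ring_nf
    _ ≤ 1 / 2 * |(m - t) - (m - s)| := by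
        gcongr 1 / 2 * ?_
        exact abs_max_sub_max_le_abs (m - t) (m - s) 0
    _ = 1 / 2 * |s - t| := by rw [sub_sub_sub_cancel_left]

theorem Psi_fixedPoint_spatial_modulus_general (L κ : ℝ)
    (w : C(Set.Icc (0:ℝ) L, ℝ))
    (μ : Measure (Set.Icc (0:ℝ) L))
    (pstar : C(Set.Icc (0:ℝ) L, ℝ))
    (hfix : ∀ x : Set.Icc (0:ℝ) L, Psi L κ w μ pstar x = pstar x) :
    ∀ x₁ x₂ : Set.Icc (0:ℝ) L,
      |pstar x₁ - pstar x₂| ≤ (1 / 2) * |w x₁ - w x₂| := by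
  intro x₁ x₂
  rw [← hfix x₁, ← hfix x₂]
  exact abs_sub_half_posPart_sub_le _ _ _

/-- Spatial modulus of continuity of the fixed point of `Ψ_{w,μ}`:
`|p*(x₁) − p*(x₂)| ≤ (1/2)|w(x₁) − w(x₂)|`. -/
theorem Psi_fixedPoint_spatial_modulus (L κ : ℝ) (hL : 0 < L) (hκ : 0 < κ)
    (w : C(Set.Icc (0:ℝ) L, ℝ))
    (μ : Measure (Set.Icc (0:ℝ) L)) [IsFiniteMeasure μ]
    (hη : 0 < (μ Set.univ).toReal) (hη1 : (μ Set.univ).toReal ≤ 1)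
    (pstar : C(Set.Icc (0:ℝ) L, ℝ))
    (hfix : ∀ x : Set.Icc (0:ℝ) L, Psi L κ w μ pstar x = pstar x) :
    ∀ x₁ x₂ : Set.Icc (0:ℝ) L,
      |pstar x₁ - pstar x₂| ≤ (1 / 2) * |w x₁ - w x₂| :=
  Psi_fixedPoint_spatial_modulus_general L κ w μ pstar hfix
end

section
/- Let (Ω, 𝒜, μ) be a measure space, κ > 0, and ḡ₁, ḡ₂ ∈ ℝ. Let w₁, w₂ : Ω → ℝ be measurable and m₁, m₂ : Ω → ℝ measurable with m₁ ≥ 0 and m₂ ≥ 0. Set g_i(x) := (1/2)(1 − κḡ_i − w_i(x))⁺. Assume g₁m₁ and g₂m₂ are integrable with ∫ g_i m_i dμ = ḡ_i for i = 1,2, and assume that the function (2(g₁ − g₂) + (w₁ − w₂))·(g₂m₂ − g₁m₁) is integrable. Then ∫ (2(g₁ − g₂) + (w₁ − w₂))·(g₂m₂ − g₁m₁) dμ ≥ κ(ḡ₁ − ḡ₂)². -/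
open MeasureTheory

/-- The Lasry–Lions-type monotonicity inequality from the uniqueness proof:
with `g_i = (1/2)(1 − κḡ_i − w_i)⁺` and `∫ g_i m_i = ḡ_i`,
`∫ (2(g₁ − g₂) + (w₁ − w₂))·(g₂m₂ − g₁m₁) ≥ κ(ḡ₁ − ḡ₂)²`. -/
theorem monotonicity_inequality
    {Ω : Type*} [MeasurableSpace Ω] (μ : Measure Ω)
    (κ : ℝ) (hκ : 0 < κ) (g1bar g2bar : ℝ)
    (w1 w2 m1 m2 : Ω → ℝ)
    (hw1 : Measurable w1) (hw2 : Measurable w2)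
    (hm1 : Measurable m1) (hm2 : Measurable m2)
    (hm1pos : ∀ x, 0 ≤ m1 x) (hm2pos : ∀ x, 0 ≤ m2 x)
    (hint1 : Integrable (fun x => ((1 / 2) * max (1 - κ * g1bar - w1 x) 0) * m1 x) μ)
    (hint2 : Integrable (fun x => ((1 / 2) * max (1 - κ * g2bar - w2 x) 0) * m2 x) μ)
    (hbar1 : ∫ x, ((1 / 2) * max (1 - κ * g1bar - w1 x) 0) * m1 x ∂μ = g1bar)
    (hbar2 : ∫ x, ((1 / 2) * max (1 - κ * g2bar - w2 x) 0) * m2 x ∂μ = g2bar)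
    (hint : Integrable (fun x =>
      (2 * ((1 / 2) * max (1 - κ * g1bar - w1 x) 0 -
              (1 / 2) * max (1 - κ * g2bar - w2 x) 0) + (w1 x - w2 x)) *
        (((1 / 2) * max (1 - κ * g2bar - w2 x) 0) * m2 x -
          ((1 / 2) * max (1 - κ * g1bar - w1 x) 0) * m1 x)) μ) :
    (∫ x, (2 * ((1 / 2) * max (1 - κ * g1bar - w1 x) 0 -
              (1 / 2) * max (1 - κ * g2bar - w2 x) 0) + (w1 x - w2 x)) *
        (((1 / 2) * max (1 - κ * g2bar - w2 x) 0) * m2 x -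
          ((1 / 2) * max (1 - κ * g1bar - w1 x) 0) * m1 x) ∂μ) ≥
      κ * (g1bar - g2bar) ^ 2 := by
  have hdiff : Integrable (fun x =>
      ((1 / 2) * max (1 - κ * g2bar - w2 x) 0) * m2 x -
        ((1 / 2) * max (1 - κ * g1bar - w1 x) 0) * m1 x) μ := hint2.sub hint1
  have hlow : Integrable (fun x => (-κ * (g1bar - g2bar)) *
      (((1 / 2) * max (1 - κ * g2bar - w2 x) 0) * m2 x -
        ((1 / 2) * max (1 - κ * g1bar - w1 x) 0) * m1 x)) μ := hdiff.const_mul _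
  have key : ∀ x, (-κ * (g1bar - g2bar)) *
      (((1 / 2) * max (1 - κ * g2bar - w2 x) 0) * m2 x -
        ((1 / 2) * max (1 - κ * g1bar - w1 x) 0) * m1 x) ≤
      (2 * ((1 / 2) * max (1 - κ * g1bar - w1 x) 0 -
              (1 / 2) * max (1 - κ * g2bar - w2 x) 0) + (w1 x - w2 x)) *
        (((1 / 2) * max (1 - κ * g2bar - w2 x) 0) * m2 x -
          ((1 / 2) * max (1 - κ * g1bar - w1 x) 0) * m1 x) := by
    intro x
    set a1 : ℝ := 1 - κ * g1bar - w1 x with ha1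
    set a2 : ℝ := 1 - κ * g2bar - w2 x with ha2
    set p1 : ℝ := max a1 0 with hp1
    set p2 : ℝ := max a2 0 with hp2
    have hw12 : w1 x - w2 x = -κ * (g1bar - g2bar) - a1 + a2 := by
      rw [ha1, ha2]; ring
    have hp1a : a1 ≤ p1 := le_max_left _ _
    have hp2a : a2 ≤ p2 := le_max_left _ _
    have hp1n : 0 ≤ p1 := le_max_right _ _
    have hp2n : 0 ≤ p2 := le_max_right _ _
    have hz1 : p1 * (p1 - a1) = 0 := by
      rcases le_total a1 0 with h | h
      · rw [hp1, max_eq_right h]; ring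
      · rw [hp1, max_eq_left h]; ring
    have hz2 : p2 * (p2 - a2) = 0 := by
      rcases le_total a2 0 with h | h
      · rw [hp2, max_eq_right h]; ring
      · rw [hp2, max_eq_left h]; ring
    have hz1' : p1 * (p1 - a1) * m1 x = 0 := by rw [hz1]; ring
    have hz2' : p2 * (p2 - a2) * m2 x = 0 := by rw [hz2]; ring
    clear_value p1 p2 a1 a2
    rw [hw12]
    nlinarith [mul_nonneg (mul_nonneg (sub_nonneg.mpr hp1a) hp2n) (hm2pos x),
      mul_nonneg (mul_nonneg (sub_nonneg.mpr hp2a) hp1n) (hm1pos x), hz1', hz2']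
  calc κ * (g1bar - g2bar) ^ 2
      = (-κ * (g1bar - g2bar)) * (g2bar - g1bar) := by ring
    _ = ∫ x, (-κ * (g1bar - g2bar)) *
        (((1 / 2) * max (1 - κ * g2bar - w2 x) 0) * m2 x -
          ((1 / 2) * max (1 - κ * g1bar - w1 x) 0) * m1 x) ∂μ := by
        rw [integral_const_mul, integral_sub hint2 hint1, hbar1, hbar2]
    _ ≤ _ := integral_mono hlow hint key
end

section
/- Let x₁, x₂, x₃ and e₁, e₂, e₃ and c be real numbers with e₁ ≤ e₂ ≤ e₃. Then inf_{γ∈[0,1]} |x₂ − (1−γ)x₁ − γx₃| ≤ |(x₁ + c·e₁) − (x₂ + c·e₂)| + |(x₂ + c·e₂) − (x₃ + c·e₃)|. -/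
/-!
Since `e₁ ≤ e₂ ≤ e₃`, write `e₂ = (1 - γ) e₁ + γ e₃` with `γ ∈ [0, 1]`. For this `γ` the affine
combination `x₂ - (1 - γ) x₁ - γ x₃` does not change when `c • e` is added to `x`, and for
`y = x + c • e` it equals `(1 - γ) (y₂ - y₁) + γ (y₂ - y₃)`, which is bounded by
`|y₁ - y₂| + |y₂ - y₃|`.
-/

/-- The oscillation functional `H(x₁, x₂, x₃)` of the M1 topology. -/
noncomputable def m1Oscillation (x₁ x₂ x₃ : ℝ) : ℝ :=
  sInf ((fun γ : ℝ => |x₂ - (1 - γ) * x₁ - γ * x₃|) '' Set.Icc 0 1)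

theorem m1Oscillation_le {γ : ℝ} (hγ : γ ∈ Set.Icc (0 : ℝ) 1) (x₁ x₂ x₃ : ℝ) :
    m1Oscillation x₁ x₂ x₃ ≤ |x₂ - (1 - γ) * x₁ - γ * x₃| :=
  csInf_le ⟨0, by rintro _ ⟨_, _, rfl⟩; exact abs_nonneg _⟩ ⟨γ, hγ, rfl⟩

theorem exists_mem_Icc_eq_convex_combination {a b c : ℝ} (hab : a ≤ b) (hbc : b ≤ c) :
    ∃ γ ∈ Set.Icc (0 : ℝ) 1, b = (1 - γ) * a + γ * c := by
  have hb : b ∈ segment ℝ a c := by rw [segment_eq_Icc (hab.trans hbc)]; exact ⟨hab, hbc⟩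
  rw [segment_eq_image] at hb
  obtain ⟨γ, hγ, hγb⟩ := hb
  exact ⟨γ, hγ, by simpa only [smul_eq_mul] using hγb.symm⟩

theorem abs_sub_convex_combination_le {γ : ℝ} (hγ : γ ∈ Set.Icc (0 : ℝ) 1) (y₁ y₂ y₃ : ℝ) :
    |y₂ - (1 - γ) * y₁ - γ * y₃| ≤ |y₁ - y₂| + |y₂ - y₃| := by
  obtain ⟨hγ0, hγ1⟩ := hγ
  calc |y₂ - (1 - γ) * y₁ - γ * y₃| = |(1 - γ) * (y₂ - y₁) + γ * (y₂ - y₃)| := by ring_nf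
    _ ≤ (1 - γ) * |y₂ - y₁| + γ * |y₂ - y₃| := by
      refine (abs_add_le _ _).trans_eq ?_
      rw [abs_mul, abs_mul, abs_of_nonneg (sub_nonneg.mpr hγ1), abs_of_nonneg hγ0]
    _ ≤ |y₁ - y₂| + |y₂ - y₃| := by
      rw [abs_sub_comm y₂ y₁]
      nlinarith [abs_nonneg (y₁ - y₂), abs_nonneg (y₂ - y₃)]

/-- M1-oscillation decomposition: for `e₁ ≤ e₂ ≤ e₃`,
`inf_{γ∈[0,1]} |x₂ − (1−γ)x₁ − γx₃| ≤ |(x₁+ce₁) − (x₂+ce₂)| + |(x₂+ce₂) − (x₃+ce₃)|`. -/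
theorem m1_oscillation_decomposition (x₁ x₂ x₃ e₁ e₂ e₃ c : ℝ)
    (h12 : e₁ ≤ e₂) (h23 : e₂ ≤ e₃) :
    sInf ((fun γ : ℝ => |x₂ - (1 - γ) * x₁ - γ * x₃|) '' Set.Icc 0 1) ≤
      |(x₁ + c * e₁) - (x₂ + c * e₂)| + |(x₂ + c * e₂) - (x₃ + c * e₃)| := by
  obtain ⟨γ, hγ, he₂⟩ := exists_mem_Icc_eq_convex_combination h12 h23
  have hshift : x₂ - (1 - γ) * x₁ - γ * x₃ =
      (x₂ + c * e₂) - (1 - γ) * (x₁ + c * e₁) - γ * (x₃ + c * e₃) := by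
    rw [he₂]; ring
  calc m1Oscillation x₁ x₂ x₃ ≤ |x₂ - (1 - γ) * x₁ - γ * x₃| := m1Oscillation_le hγ x₁ x₂ x₃
    _ ≤ _ := hshift ▸ abs_sub_convex_combination_le hγ _ _ _
end
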